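/- Assuming Mertens' third theorem, i.e. lim_{n→∞} (log p_n) · ∏_{i=1}^{n} (1 - 1/p_i) = e^{-γ}, one has lim_{n→∞} (log p_n)^2 · ∏_{i=2}^{n} (1 - 2/p_i) = 4 · C_2 · e^{-2γ}, where C_2 = ∏_{i=2}^{∞} (1 - 1/(p_i - 1)^2). -/

import Mathlib

/-! For a prime `p ≥ 3`, `1 - 2/p = (1 - 1/(p-1)^2) (1 - 1/p)^2`, so the twin-prime sieve
product is the partial product of `C₂` times the square of the Mertens product over the odd
primes. The latter is twice the full Mertens product, since the prime `2` contributes the factor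
`1/2`; this is where the `4` comes from. -/

open Filter

/-- `p i` is the `i`-th prime number, so that `p 1 = 2`, `p 2 = 3`, ... -/
noncomputable def p (i : ℕ) : ℕ := Nat.nth Nat.Prime (i - 1)

theorem prime_p (i : ℕ) : (p i).Prime := Nat.prime_nth_prime _

theorem p_one : p 1 = 2 := Nat.nth_prime_zero_eq_two

theorem one_sub_two_div_eq {x : ℝ} (hx : x ≠ 0) (hx1 : x - 1 ≠ 0) :
    1 - 2 / x = (1 - 1 / (x - 1) ^ 2) * (1 - 1 / x) ^ 2 := by
  field_simp
  ring

theorem prod_Icc_one_eq_half_mul {n : ℕ} (hn : 1 ≤ n) :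
    ∏ i ∈ Finset.Icc 1 n, (1 - 1 / (p i : ℝ)) =
      1 / 2 * ∏ i ∈ Finset.Icc 2 n, (1 - 1 / (p i : ℝ)) := by
  rw [Finset.Icc_eq_cons_Ioc hn, Finset.prod_cons, p_one, ← Finset.Icc_add_one_left_eq_Ioc]
  norm_num

theorem prod_Icc_two_one_sub_two_div {n : ℕ} (hn : 1 ≤ n) :
    ∏ i ∈ Finset.Icc 2 n, (1 - 2 / (p i : ℝ)) =
      (∏ i ∈ Finset.Icc 2 n, (1 - 1 / ((p i : ℝ) - 1) ^ 2)) *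
        (2 * ∏ i ∈ Finset.Icc 1 n, (1 - 1 / (p i : ℝ))) ^ 2 := by
  have hfactor : ∀ i ∈ Finset.Icc 2 n, (1 - 2 / (p i : ℝ)) =
      (1 - 1 / ((p i : ℝ) - 1) ^ 2) * (1 - 1 / (p i : ℝ)) ^ 2 := by
    intro i _
    have h2 : (2 : ℝ) ≤ p i := by exact_mod_cast (prime_p i).two_le
    exact one_sub_two_div_eq (by linarith) (by linarith)
  rw [Finset.prod_congr rfl hfactor, Finset.prod_mul_distrib, Finset.prod_pow,
    prod_Icc_one_eq_half_mul hn]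
  ring

theorem stmt_5 (C2 : ℝ)
    (hMertens : Tendsto
      (fun n : ℕ => Real.log (p n) * ∏ i ∈ Finset.Icc 1 n, (1 - 1 / (p i : ℝ)))
      atTop (nhds (Real.exp (-Real.eulerMascheroniConstant))))
    (hC2 : Tendsto
      (fun n : ℕ => ∏ i ∈ Finset.Icc 2 n, (1 - 1 / ((p i : ℝ) - 1) ^ 2))
      atTop (nhds C2)) :
    Tendsto (fun n : ℕ => (Real.log (p n)) ^ 2 * ∏ i ∈ Finset.Icc 2 n, (1 - 2 / (p i : ℝ)))
      atTop (nhds (4 * C2 * Real.exp (-2 * Real.eulerMascheroniConstant))) := by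
  have hlimit : C2 * (2 * Real.exp (-Real.eulerMascheroniConstant)) ^ 2 =
      4 * C2 * Real.exp (-2 * Real.eulerMascheroniConstant) := by
    rw [mul_pow, ← Real.exp_nat_mul]
    ring_nf
  rw [← hlimit]
  refine (hC2.mul ((hMertens.const_mul 2).pow 2)).congr' ?_
  filter_upwards [eventually_ge_atTop 1] with n hn
  rw [prod_Icc_two_one_sub_two_div hn]
  ring
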